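/- arXiv:0802.2107 — 3 statements merged into one kernel-verified Lean document; each statement's English description precedes it below -/
import Mathlib

section
/- Suppose B₃ > B₁, B₃ > B₂, B₀ > B₃, and A₀ > 0 while A₁ = A₂ = A₃ = 0. Then the global minimum of V on LC⁺ is attained exactly at the two points r± = (c, 0, 0, ±c) with c = A₀/(B₀ − B₃), and the minimum value is V(r±) = −A₀²/(2(B₀ − B₃)). In particular, the ground state spontaneously breaks the explicit symmetry r₃ ↦ −r₃ of the potential. -/
/-- The forward lightcone in ℝ⁴. -/
def LCplus : Set (Fin 4 → ℝ) :=
  {r | 0 ≤ r 0 ∧ (r 0) ^ 2 = (r 1) ^ 2 + (r 2) ^ 2 + (r 3) ^ 2}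

/-- The Landau potential in the diagonal frame. -/
noncomputable def V (A₀ A₁ A₂ A₃ B₀ B₁ B₂ B₃ : ℝ) (r : Fin 4 → ℝ) : ℝ :=
  -(A₀ * r 0 - A₁ * r 1 - A₂ * r 2 - A₃ * r 3) +
    (1 / 2) * (B₀ * (r 0) ^ 2 - B₁ * (r 1) ^ 2 - B₂ * (r 2) ^ 2 - B₃ * (r 3) ^ 2)

set_option maxHeartbeats 1000000 in
/-- For A along the timelike axis and B₃ the largest spacelike eigenvalue, the
global minimum is attained exactly at the two symmetry-breaking points
(c, 0, 0, ±c) with c = A₀/(B₀ − B₃), where the potential equals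
−A₀²/(2(B₀ − B₃)). -/
theorem global_min_breaks_Z2
    (A₀ B₀ B₁ B₂ B₃ : ℝ)
    (h31 : B₁ < B₃) (h32 : B₂ < B₃) (h30 : B₃ < B₀)
    (hA : 0 < A₀) :
    {r : Fin 4 → ℝ | r ∈ LCplus ∧ ∀ s ∈ LCplus,
        V A₀ 0 0 0 B₀ B₁ B₂ B₃ r ≤ V A₀ 0 0 0 B₀ B₁ B₂ B₃ s} =
      {![A₀ / (B₀ - B₃), 0, 0, A₀ / (B₀ - B₃)],
       ![A₀ / (B₀ - B₃), 0, 0, -(A₀ / (B₀ - B₃))]} ∧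
    V A₀ 0 0 0 B₀ B₁ B₂ B₃ ![A₀ / (B₀ - B₃), 0, 0, A₀ / (B₀ - B₃)] =
      -(A₀ ^ 2) / (2 * (B₀ - B₃)) ∧
    V A₀ 0 0 0 B₀ B₁ B₂ B₃ ![A₀ / (B₀ - B₃), 0, 0, -(A₀ / (B₀ - B₃))] =
      -(A₀ ^ 2) / (2 * (B₀ - B₃)) := by
  set c : ℝ := A₀ / (B₀ - B₃) with hc
  have hB : (0:ℝ) < B₀ - B₃ := by linarith
  have hcB : c * (B₀ - B₃) = A₀ := by
    rw [hc]; exact div_mul_cancel₀ A₀ (ne_of_gt hB)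
  have hc0 : 0 ≤ c := le_of_lt (div_pos hA hB)
  have hm : -(A₀ ^ 2) / (2 * (B₀ - B₃)) = -(A₀ * c) / 2 := by
    rw [hc]; field_simp
  -- key formula on the lightcone
  have key : ∀ s ∈ LCplus, V A₀ 0 0 0 B₀ B₁ B₂ B₃ s
      = -(A₀ * c) / 2 + (B₀ - B₃) / 2 * (s 0 - c) ^ 2
        + (B₃ - B₁) / 2 * (s 1) ^ 2 + (B₃ - B₂) / 2 * (s 2) ^ 2 := by
    intro s hs
    obtain ⟨_, h1⟩ := hs
    have h3 : (s 3) ^ 2 = (s 0) ^ 2 - (s 1) ^ 2 - (s 2) ^ 2 := by linarith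
    simp only [V]
    rw [h3, hc]
    field_simp
    ring
  -- values at the two points
  have hp : (![c, 0, 0, c] : Fin 4 → ℝ) ∈ LCplus := by
    constructor
    · simpa using hc0
    · simp
  have hq : (![c, 0, 0, -c] : Fin 4 → ℝ) ∈ LCplus := by
    constructor
    · simpa using hc0
    · simp
  have hVp : V A₀ 0 0 0 B₀ B₁ B₂ B₃ ![c, 0, 0, c] = -(A₀ * c) / 2 := by
    rw [key _ hp]; simp
  have hVq : V A₀ 0 0 0 B₀ B₁ B₂ B₃ ![c, 0, 0, -c] = -(A₀ * c) / 2 := by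
    rw [key _ hq]; simp
  have hmin : ∀ s ∈ LCplus, -(A₀ * c) / 2 ≤ V A₀ 0 0 0 B₀ B₁ B₂ B₃ s := by
    intro s hs
    rw [key s hs]
    nlinarith [sq_nonneg (s 0 - c), sq_nonneg (s 1), sq_nonneg (s 2)]
  refine ⟨?_, by rw [hVp, hm], by rw [hVq, hm]⟩
  ext r
  simp only [Set.mem_setOf_eq, Set.mem_insert_iff, Set.mem_singleton_iff]
  constructor
  · rintro ⟨hr, hmin'⟩
    have hle : V A₀ 0 0 0 B₀ B₁ B₂ B₃ r ≤ -(A₀ * c) / 2 := by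
      have := hmin' _ hp
      rw [hVp] at this; exact this
    have hge := hmin r hr
    have heq : V A₀ 0 0 0 B₀ B₁ B₂ B₃ r = -(A₀ * c) / 2 := le_antisymm hle hge
    rw [key r hr] at heq
    have n1 : 0 ≤ (B₀ - B₃) / 2 * (r 0 - c) ^ 2 :=
      mul_nonneg (by linarith) (sq_nonneg _)
    have n2 : 0 ≤ (B₃ - B₁) / 2 * (r 1) ^ 2 :=
      mul_nonneg (by linarith) (sq_nonneg _)
    have n3 : 0 ≤ (B₃ - B₂) / 2 * (r 2) ^ 2 :=
      mul_nonneg (by linarith) (sq_nonneg _)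
    have z1 : (B₀ - B₃) / 2 * (r 0 - c) ^ 2 = 0 := by linarith
    have z2 : (B₃ - B₁) / 2 * (r 1) ^ 2 = 0 := by linarith
    have z3 : (B₃ - B₂) / 2 * (r 2) ^ 2 = 0 := by linarith
    have h0 : r 0 = c := by
      have h := (mul_eq_zero.mp z1).resolve_left (ne_of_gt (by linarith))
      have := (pow_eq_zero_iff (two_ne_zero)).mp h
      linarith
    have h1 : r 1 = 0 := by
      have h := (mul_eq_zero.mp z2).resolve_left (ne_of_gt (by linarith))
      exact (pow_eq_zero_iff (two_ne_zero)).mp h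
    have h2 : r 2 = 0 := by
      have h := (mul_eq_zero.mp z3).resolve_left (ne_of_gt (by linarith))
      exact (pow_eq_zero_iff (two_ne_zero)).mp h
    obtain ⟨_, hcone⟩ := hr
    have h3 : (r 3 - c) * (r 3 + c) = 0 := by
      rw [h0, h1, h2] at hcone; nlinarith
    rcases mul_eq_zero.mp h3 with h | h
    · left
      funext i
      fin_cases i <;> simp [h0, h1, h2]
      linarith
    · right
      funext i
      fin_cases i <;> simp [h0, h1, h2]
      linarith
  · rintro (rfl | rfl)
    · exact ⟨hp, fun s hs => hVp ▸ hmin s hs⟩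
    · refine ⟨by simpa using hq, fun s hs => ?_⟩
      have : V A₀ 0 0 0 B₀ B₁ B₂ B₃ ![c, 0, 0, -c] ≤ V A₀ 0 0 0 B₀ B₁ B₂ B₃ s :=
        hVq ▸ hmin s hs
      simpa using this
end

section
/- Suppose B₁, B₂, B₃ are pairwise distinct and each is strictly less than B₀, and suppose A₃ = 0 (so the potential has the explicit Z₂ symmetry r₃ ↦ −r₃). Then the global minimum of V on LC⁺ is attained at exactly two points, which are of the form (r₀, r₁, r₂, r₃) and (r₀, r₁, r₂, −r₃) with r₃ ≠ 0 (spontaneous breaking of the Z₂ symmetry), if and only if A₀ > 0, B₃ > B₁, B₃ > B₂, and A₁²/(B₃ − B₁)² + A₂²/(B₃ − B₂)² < A₀²/(B₀ − B₃)². -/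
lemma pert_bound {a M : ℝ} (hM : 0 < M) {u : ℝ}
    (hu : |u - a| ≤ min 1 (M / (2*|a|+1))) : u^2 ≤ a^2 + M := by
  have hd0 : (0:ℝ) < 2*|a|+1 := by positivity
  have h1 : |u - a| ≤ 1 := le_trans hu (min_le_left _ _)
  have h2 : |u - a| * (2*|a|+1) ≤ M := (le_div_iff₀ hd0).mp (le_trans hu (min_le_right _ _))
  have e1 : (u-a)^2 ≤ |u-a| := by nlinarith [sq_abs (u-a), abs_nonneg (u-a)]
  have e2 : 2 * (a * (u - a)) ≤ 2 * (|a| * |u - a|) := by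
    have := le_abs_self (a*(u-a))
    rw [abs_mul] at this
    linarith
  nlinarith [abs_nonneg (u-a), abs_nonneg a]

-- quad_aux as before (assume proven, include)
lemma quad_aux {c b x δ : ℝ} (hδ : 0 < δ)
    (h : ∀ y : ℝ, |y - x| ≤ δ → c/2*x^2 + b*x ≤ c/2*y^2 + b*y) :
    0 ≤ c ∧ c*x + b = 0 := by
  have h1 : ∀ t : ℝ, 0 ≤ t → t ≤ δ → 0 ≤ c/2*t^2 + (c*x+b)*t := by
    intro t ht htδ
    have := h (x + t) (by rw [add_sub_cancel_left, abs_of_nonneg ht]; exact htδ)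
    nlinarith
  have h2 : ∀ t : ℝ, 0 ≤ t → t ≤ δ → 0 ≤ c/2*t^2 - (c*x+b)*t := by
    intro t ht htδ
    have := h (x - t) (by rw [show x - t - x = -t by ring, abs_neg, abs_of_nonneg ht]; exact htδ)
    nlinarith
  have hc : 0 ≤ c := by
    have a1 := h1 δ hδ.le le_rfl
    have a2 := h2 δ hδ.le le_rfl
    nlinarith [mul_pos hδ hδ]
  refine ⟨hc, ?_⟩
  by_contra hd
  rcases lt_or_gt_of_ne hd with hneg | hpos
  · rcases eq_or_lt_of_le hc with hc0 | hc0
    · have e : c = 0 := hc0.symm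
      have h1' := h1 δ hδ.le le_rfl
      rw [e] at h1' hneg
      simp at h1' hneg
      nlinarith
    · set t := min δ (-(c*x+b)/c) with ht
      have ht1 : 0 < t := lt_min hδ (div_pos (by linarith) hc0)
      have := h1 t ht1.le (min_le_left _ _)
      have ht2 : t ≤ -(c*x+b)/c := min_le_right _ _
      have hct : t * c ≤ -(c*x+b) := (le_div_iff₀ hc0).mp ht2
      nlinarith [mul_le_mul_of_nonneg_right hct ht1.le, mul_pos ht1 ht1]
  · rcases eq_or_lt_of_le hc with hc0 | hc0
    · have e : c = 0 := hc0.symm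
      have h2' := h2 δ hδ.le le_rfl
      rw [e] at h2' hpos
      simp at h2' hpos
      nlinarith
    · set t := min δ ((c*x+b)/c) with ht
      have ht1 : 0 < t := lt_min hδ (div_pos hpos hc0)
      have := h2 t ht1.le (min_le_left _ _)
      have ht2 : t ≤ (c*x+b)/c := min_le_right _ _
      have hct : t * c ≤ (c*x+b) := (le_div_iff₀ hc0).mp ht2
      nlinarith [mul_le_mul_of_nonneg_right hct ht1.le, mul_pos ht1 ht1]

lemma V_decomp (A₀ A₁ A₂ B₀ B₁ B₂ B₃ : ℝ) (s : Fin 4 → ℝ)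
    (hs : (s 0) ^ 2 = (s 1) ^ 2 + (s 2) ^ 2 + (s 3) ^ 2) :
    V A₀ A₁ A₂ 0 B₀ B₁ B₂ B₃ s =
      ((B₀-B₃)/2 * (s 0)^2 + (-A₀) * (s 0))
      + ((B₃-B₁)/2 * (s 1)^2 + A₁ * (s 1))
      + ((B₃-B₂)/2 * (s 2)^2 + A₂ * (s 2)) := by
  simp only [V]
  linear_combination (B₃/2) * hs

lemma quad_lower {c A x u : ℝ} (hc : 0 ≤ c) (he : c * x + A = 0) :
    c/2*x^2 + A*x ≤ c/2*u^2 + A*u := by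
  have h2 : c/2*u^2 + A*u - (c/2*x^2 + A*x) = c/2*(u-x)^2 := by
    linear_combination (u - x) * he
  nlinarith [mul_nonneg hc (sq_nonneg (u - x))]

lemma fwd_dir
    (A₀ A₁ A₂ B₀ B₁ B₂ B₃ : ℝ)
    (h12 : B₁ ≠ B₂) (h13 : B₁ ≠ B₃) (h23 : B₂ ≠ B₃)
    (h1 : B₁ < B₀) (h2 : B₂ < B₀) (h3 : B₃ < B₀) :
    (∃ r₀ r₁ r₂ r₃ : ℝ, r₃ ≠ 0 ∧
      {r : Fin 4 → ℝ | r ∈ LCplus ∧ ∀ s ∈ LCplus,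
          V A₀ A₁ A₂ 0 B₀ B₁ B₂ B₃ r ≤ V A₀ A₁ A₂ 0 B₀ B₁ B₂ B₃ s} =
        {![r₀, r₁, r₂, r₃], ![r₀, r₁, r₂, -r₃]}) →
    (0 < A₀ ∧ B₁ < B₃ ∧ B₂ < B₃ ∧
      A₁ ^ 2 / (B₃ - B₁) ^ 2 + A₂ ^ 2 / (B₃ - B₂) ^ 2 <
        A₀ ^ 2 / (B₀ - B₃) ^ 2) := by
  have hc₀ : (0:ℝ) < B₀ - B₃ := by linarith
  rintro ⟨r₀, r₁, r₂, r₃, hr₃, hset⟩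
  have hpmem : (![r₀,r₁,r₂,r₃]) ∈ ({![r₀, r₁, r₂, r₃], ![r₀, r₁, r₂, -r₃]} : Set (Fin 4 → ℝ)) :=
    Set.mem_insert _ _
  rw [← hset] at hpmem
  obtain ⟨hpLC, hpmin⟩ := hpmem
  have h0 : 0 ≤ r₀ := hpLC.1
  have hsq : r₀^2 = r₁^2 + r₂^2 + r₃^2 := hpLC.2
  have hr3sq : 0 < r₃^2 := by positivity
  have hlt : r₁^2 + r₂^2 < r₀^2 := by linarith
  have hr0 : 0 < r₀ := by nlinarith [sq_nonneg r₁, sq_nonneg r₂]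
  have hVp : V A₀ A₁ A₂ 0 B₀ B₁ B₂ B₃ ![r₀,r₁,r₂,r₃]
      = ((B₀-B₃)/2 * r₀^2 + (-A₀) * r₀) + ((B₃-B₁)/2 * r₁^2 + A₁ * r₁)
        + ((B₃-B₂)/2 * r₂^2 + A₂ * r₂) :=
    V_decomp _ _ _ _ _ _ _ ![r₀,r₁,r₂,r₃] hsq
  -- coordinate 0
  set a := Real.sqrt (r₁^2 + r₂^2) with ha
  have ha2 : a^2 = r₁^2 + r₂^2 := Real.sq_sqrt (by positivity)
  have ha0 : 0 ≤ a := Real.sqrt_nonneg _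
  have har : a < r₀ := by nlinarith
  have key0 : ∀ t:ℝ, |t - r₀| ≤ (r₀ - a) →
      (B₀-B₃)/2*r₀^2 + (-A₀)*r₀ ≤ (B₀-B₃)/2*t^2 + (-A₀)*t := by
    intro t htb
    obtain ⟨hl, hr⟩ := abs_le.mp htb
    have hta : a ≤ t := by linarith
    have ht0 : 0 ≤ t := le_trans ha0 hta
    have htsq : r₁^2 + r₂^2 ≤ t^2 := by nlinarith
    set w := Real.sqrt (t^2 - r₁^2 - r₂^2) with hw
    have hw2 : w^2 = t^2 - r₁^2 - r₂^2 := Real.sq_sqrt (by linarith)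
    have hwsq : t^2 = r₁^2 + r₂^2 + w^2 := by linarith
    have hsLC : (![t, r₁, r₂, w]) ∈ LCplus := ⟨ht0, hwsq⟩
    have hVs : V A₀ A₁ A₂ 0 B₀ B₁ B₂ B₃ ![t,r₁,r₂,w]
        = ((B₀-B₃)/2 * t^2 + (-A₀) * t) + ((B₃-B₁)/2 * r₁^2 + A₁ * r₁)
          + ((B₃-B₂)/2 * r₂^2 + A₂ * r₂) :=
      V_decomp _ _ _ _ _ _ _ ![t,r₁,r₂,w] hwsq
    have hle := hpmin _ hsLC
    rw [hVp, hVs] at hle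
    linarith
  obtain ⟨-, he0⟩ := quad_aux (by linarith : (0:ℝ) < r₀ - a) key0
  have hA0eq : A₀ = (B₀-B₃)*r₀ := by linarith
  have hA0pos : 0 < A₀ := by rw [hA0eq]; exact mul_pos hc₀ hr0
  -- coordinate 1
  have hδ₁ : (0:ℝ) < min 1 (r₃^2 / (2*|r₁|+1)) :=
    lt_min one_pos (div_pos hr3sq (by positivity))
  have key1 : ∀ u:ℝ, |u - r₁| ≤ min 1 (r₃^2 / (2*|r₁|+1)) →
      (B₃-B₁)/2*r₁^2 + A₁*r₁ ≤ (B₃-B₁)/2*u^2 + A₁*u := by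
    intro u hub
    have hu2 : u^2 ≤ r₁^2 + r₃^2 := pert_bound hr3sq hub
    have hnn : 0 ≤ r₀^2 - u^2 - r₂^2 := by linarith
    set w := Real.sqrt (r₀^2 - u^2 - r₂^2) with hw
    have hw2 : w^2 = r₀^2 - u^2 - r₂^2 := Real.sq_sqrt hnn
    have hwsq : r₀^2 = u^2 + r₂^2 + w^2 := by linarith
    have hsLC : (![r₀, u, r₂, w]) ∈ LCplus := ⟨h0, hwsq⟩
    have hVs : V A₀ A₁ A₂ 0 B₀ B₁ B₂ B₃ ![r₀,u,r₂,w]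
        = ((B₀-B₃)/2 * r₀^2 + (-A₀) * r₀) + ((B₃-B₁)/2 * u^2 + A₁ * u)
          + ((B₃-B₂)/2 * r₂^2 + A₂ * r₂) :=
      V_decomp _ _ _ _ _ _ _ ![r₀,u,r₂,w] hwsq
    have hle := hpmin _ hsLC
    rw [hVp, hVs] at hle
    linarith
  obtain ⟨hc1nn, he1⟩ := quad_aux hδ₁ key1
  have hb13 : B₁ < B₃ := lt_of_le_of_ne (by linarith) h13
  -- coordinate 2
  have hδ₂ : (0:ℝ) < min 1 (r₃^2 / (2*|r₂|+1)) :=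
    lt_min one_pos (div_pos hr3sq (by positivity))
  have key2 : ∀ u:ℝ, |u - r₂| ≤ min 1 (r₃^2 / (2*|r₂|+1)) →
      (B₃-B₂)/2*r₂^2 + A₂*r₂ ≤ (B₃-B₂)/2*u^2 + A₂*u := by
    intro u hub
    have hu2 : u^2 ≤ r₂^2 + r₃^2 := pert_bound hr3sq hub
    have hnn : 0 ≤ r₀^2 - r₁^2 - u^2 := by linarith
    set w := Real.sqrt (r₀^2 - r₁^2 - u^2) with hw
    have hw2 : w^2 = r₀^2 - r₁^2 - u^2 := Real.sq_sqrt hnn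
    have hwsq : r₀^2 = r₁^2 + u^2 + w^2 := by linarith
    have hsLC : (![r₀, r₁, u, w]) ∈ LCplus := ⟨h0, hwsq⟩
    have hVs : V A₀ A₁ A₂ 0 B₀ B₁ B₂ B₃ ![r₀,r₁,u,w]
        = ((B₀-B₃)/2 * r₀^2 + (-A₀) * r₀) + ((B₃-B₁)/2 * r₁^2 + A₁ * r₁)
          + ((B₃-B₂)/2 * u^2 + A₂ * u) :=
      V_decomp _ _ _ _ _ _ _ ![r₀,r₁,u,w] hwsq
    have hle := hpmin _ hsLC
    rw [hVp, hVs] at hle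
    linarith
  obtain ⟨hc2nn, he2⟩ := quad_aux hδ₂ key2
  have hb23 : B₂ < B₃ := lt_of_le_of_ne (by linarith) h23
  refine ⟨hA0pos, hb13, hb23, ?_⟩
  have hne0 : B₀ - B₃ ≠ 0 := ne_of_gt hc₀
  have hne1 : B₃ - B₁ ≠ 0 := fun h => h13 (by linarith)
  have hne2 : B₃ - B₂ ≠ 0 := fun h => h23 (by linarith)
  have q0 : A₀^2/(B₀-B₃)^2 = r₀^2 := by rw [hA0eq]; field_simp
  have q1 : A₁^2/(B₃-B₁)^2 = r₁^2 := by
    rw [show A₁ = -((B₃-B₁)*r₁) by linarith]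
    field_simp
  have q2 : A₂^2/(B₃-B₂)^2 = r₂^2 := by
    rw [show A₂ = -((B₃-B₂)*r₂) by linarith]
    field_simp
  rw [q0, q1, q2]
  exact hlt

lemma bwd_dir
    (A₀ A₁ A₂ B₀ B₁ B₂ B₃ : ℝ)
    (h12 : B₁ ≠ B₂) (h13 : B₁ ≠ B₃) (h23 : B₂ ≠ B₃)
    (h1 : B₁ < B₀) (h2 : B₂ < B₀) (h3 : B₃ < B₀) :
    (0 < A₀ ∧ B₁ < B₃ ∧ B₂ < B₃ ∧
      A₁ ^ 2 / (B₃ - B₁) ^ 2 + A₂ ^ 2 / (B₃ - B₂) ^ 2 <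
        A₀ ^ 2 / (B₀ - B₃) ^ 2) →
    (∃ r₀ r₁ r₂ r₃ : ℝ, r₃ ≠ 0 ∧
      {r : Fin 4 → ℝ | r ∈ LCplus ∧ ∀ s ∈ LCplus,
          V A₀ A₁ A₂ 0 B₀ B₁ B₂ B₃ r ≤ V A₀ A₁ A₂ 0 B₀ B₁ B₂ B₃ s} =
        {![r₀, r₁, r₂, r₃], ![r₀, r₁, r₂, -r₃]}) := by
  have hc₀ : (0:ℝ) < B₀ - B₃ := by linarith
  rintro ⟨hA0, hb1, hb2, hcau⟩
  have hc₁ : (0:ℝ) < B₃ - B₁ := by linarith only [hb1]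
  have hc₂ : (0:ℝ) < B₃ - B₂ := by linarith only [hb2]
  have hne0 : B₀ - B₃ ≠ 0 := ne_of_gt hc₀
  have hne1 : B₃ - B₁ ≠ 0 := ne_of_gt hc₁
  have hne2 : B₃ - B₂ ≠ 0 := ne_of_gt hc₂
  obtain ⟨ρ, hρdef⟩ : ∃ ρ : ℝ, ρ = A₀ / (B₀ - B₃) := ⟨_, rfl⟩
  obtain ⟨x₁, hx₁def⟩ : ∃ x : ℝ, x = -A₁ / (B₃ - B₁) := ⟨_, rfl⟩
  obtain ⟨x₂, hx₂def⟩ : ∃ x : ℝ, x = -A₂ / (B₃ - B₂) := ⟨_, rfl⟩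
  have hρpos : 0 < ρ := hρdef ▸ div_pos hA0 hc₀
  have hρeq : (B₀ - B₃) * ρ = A₀ := by rw [hρdef]; field_simp
  have hx₁eq : (B₃ - B₁) * x₁ = -A₁ := by rw [hx₁def]; field_simp
  have hx₂eq : (B₃ - B₂) * x₂ = -A₂ := by rw [hx₂def]; field_simp
  have hρ2 : ρ^2 = A₀^2/(B₀-B₃)^2 := by rw [hρdef, div_pow]
  have hx₁2 : x₁^2 = A₁^2/(B₃-B₁)^2 := by rw [hx₁def, div_pow, neg_sq]
  have hx₂2 : x₂^2 = A₂^2/(B₃-B₂)^2 := by rw [hx₂def, div_pow, neg_sq]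
  have hlt : x₁^2 + x₂^2 < ρ^2 := by rw [hρ2, hx₁2, hx₂2]; exact hcau
  obtain ⟨x₃, hx₃def⟩ : ∃ x : ℝ, x = Real.sqrt (ρ^2 - x₁^2 - x₂^2) := ⟨_, rfl⟩
  have hx₃sq : x₃^2 = ρ^2 - x₁^2 - x₂^2 := hx₃def ▸ Real.sq_sqrt (by linarith only [hlt])
  have hx₃pos : 0 < x₃ := hx₃def ▸ Real.sqrt_pos.mpr (by linarith only [hlt])
  have hpsq : ρ^2 = x₁^2 + x₂^2 + x₃^2 := by linarith only [hx₃sq]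
  have hqsq : ρ^2 = x₁^2 + x₂^2 + (-x₃)^2 := by rw [neg_sq]; linarith only [hx₃sq]
  have hpLC : (![ρ,x₁,x₂,x₃]) ∈ LCplus := ⟨hρpos.le, hpsq⟩
  have hqLC : (![ρ,x₁,x₂,-x₃]) ∈ LCplus := ⟨hρpos.le, hqsq⟩
  have hVp : V A₀ A₁ A₂ 0 B₀ B₁ B₂ B₃ ![ρ,x₁,x₂,x₃]
      = ((B₀-B₃)/2 * ρ^2 + (-A₀) * ρ) + ((B₃-B₁)/2 * x₁^2 + A₁ * x₁)
        + ((B₃-B₂)/2 * x₂^2 + A₂ * x₂) :=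
    V_decomp _ _ _ _ _ _ _ ![ρ,x₁,x₂,x₃] hpsq
  have hVq : V A₀ A₁ A₂ 0 B₀ B₁ B₂ B₃ ![ρ,x₁,x₂,-x₃]
      = ((B₀-B₃)/2 * ρ^2 + (-A₀) * ρ) + ((B₃-B₁)/2 * x₁^2 + A₁ * x₁)
        + ((B₃-B₂)/2 * x₂^2 + A₂ * x₂) :=
    V_decomp _ _ _ _ _ _ _ ![ρ,x₁,x₂,-x₃] hqsq
  have key : ∀ s ∈ LCplus,
      ((B₀-B₃)/2 * ρ^2 + (-A₀) * ρ) + ((B₃-B₁)/2 * x₁^2 + A₁ * x₁)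
        + ((B₃-B₂)/2 * x₂^2 + A₂ * x₂) ≤ V A₀ A₁ A₂ 0 B₀ B₁ B₂ B₃ s := by
    intro s hs
    rw [V_decomp _ _ _ _ _ _ _ s hs.2]
    have k0 : (B₀-B₃)/2*ρ^2 + (-A₀)*ρ ≤ (B₀-B₃)/2*(s 0)^2 + (-A₀)*(s 0) :=
      quad_lower hc₀.le (by linarith only [hρeq])
    have k1 : (B₃-B₁)/2*x₁^2 + A₁*x₁ ≤ (B₃-B₁)/2*(s 1)^2 + A₁*(s 1) :=
      quad_lower hc₁.le (by linarith only [hx₁eq])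
    have k2 : (B₃-B₂)/2*x₂^2 + A₂*x₂ ≤ (B₃-B₂)/2*(s 2)^2 + A₂*(s 2) :=
      quad_lower hc₂.le (by linarith only [hx₂eq])
    linarith only [k0, k1, k2]
  refine ⟨ρ, x₁, x₂, x₃, ne_of_gt hx₃pos, ?_⟩
  ext s
  simp only [Set.mem_setOf_eq, Set.mem_insert_iff, Set.mem_singleton_iff]
  constructor
  · rintro ⟨hsLC, hsmin⟩
    have h1le := key s hsLC
    have h2le := hsmin _ hpLC
    rw [hVp] at h2le
    have heq := le_antisymm h2le h1le
    rw [V_decomp _ _ _ _ _ _ _ s hsLC.2] at heq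
    have k0 : (B₀-B₃)/2*ρ^2 + (-A₀)*ρ ≤ (B₀-B₃)/2*(s 0)^2 + (-A₀)*(s 0) :=
      quad_lower hc₀.le (by linarith only [hρeq])
    have k1 : (B₃-B₁)/2*x₁^2 + A₁*x₁ ≤ (B₃-B₁)/2*(s 1)^2 + A₁*(s 1) :=
      quad_lower hc₁.le (by linarith only [hx₁eq])
    have k2 : (B₃-B₂)/2*x₂^2 + A₂*x₂ ≤ (B₃-B₂)/2*(s 2)^2 + A₂*(s 2) :=
      quad_lower hc₂.le (by linarith only [hx₂eq])
    have e0' : (B₀-B₃)/2*(s 0)^2 + (-A₀)*(s 0) = (B₀-B₃)/2*ρ^2 + (-A₀)*ρ := by linarith only [heq, k0, k1, k2]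
    have e1' : (B₃-B₁)/2*(s 1)^2 + A₁*(s 1) = (B₃-B₁)/2*x₁^2 + A₁*x₁ := by linarith only [heq, k0, k1, k2]
    have e2' : (B₃-B₂)/2*(s 2)^2 + A₂*(s 2) = (B₃-B₂)/2*x₂^2 + A₂*x₂ := by linarith only [heq, k0, k1, k2]
    have m0 : (B₀-B₃) * (s 0 - ρ)^2 = 0 := by
      linear_combination 2*e0' - (2*(s 0) - 2*ρ) * hρeq
    have m1 : (B₃-B₁) * (s 1 - x₁)^2 = 0 := by
      linear_combination 2*e1' - (2*(s 1) - 2*x₁) * hx₁eq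
    have m2 : (B₃-B₂) * (s 2 - x₂)^2 = 0 := by
      linear_combination 2*e2' - (2*(s 2) - 2*x₂) * hx₂eq
    have e0 : s 0 = ρ := by
      exact sub_eq_zero.mp (pow_eq_zero_iff (n := 2) (by norm_num) |>.mp ((mul_eq_zero.mp m0).resolve_left hne0))
    have e1 : s 1 = x₁ := by
      exact sub_eq_zero.mp (pow_eq_zero_iff (n := 2) (by norm_num) |>.mp ((mul_eq_zero.mp m1).resolve_left hne1))
    have e2 : s 2 = x₂ := by
      exact sub_eq_zero.mp (pow_eq_zero_iff (n := 2) (by norm_num) |>.mp ((mul_eq_zero.mp m2).resolve_left hne2))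
    have hs2 := hsLC.2
    rw [e0, e1, e2] at hs2
    have m3 : (s 3 - x₃) * (s 3 + x₃) = 0 := by linear_combination hpsq - hs2
    have hs_eta : s = ![s 0, s 1, s 2, s 3] := by
      funext i; fin_cases i <;> rfl
    rcases mul_eq_zero.mp m3 with h3 | h3
    · left
      rw [hs_eta, e0, e1, e2, sub_eq_zero.mp h3]
    · right
      rw [hs_eta, e0, e1, e2, eq_neg_of_add_eq_zero_left h3]
  · rintro (rfl | rfl)
    · exact ⟨hpLC, fun s hs => by rw [hVp]; exact key s hs⟩
    · exact ⟨hqLC, fun s hs => by rw [hVq]; exact key s hs⟩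

/-- With the explicit Z₂ symmetry r₃ ↦ −r₃ (A₃ = 0), the global minimum is a
symmetry-breaking degenerate pair iff A₀ > 0, B₃ is the largest spacelike
eigenvalue, and A lies inside the principal caustic cone. -/
theorem Z2_spontaneously_broken_iff
    (A₀ A₁ A₂ B₀ B₁ B₂ B₃ : ℝ)
    (h12 : B₁ ≠ B₂) (h13 : B₁ ≠ B₃) (h23 : B₂ ≠ B₃)
    (h1 : B₁ < B₀) (h2 : B₂ < B₀) (h3 : B₃ < B₀) :
    (∃ r₀ r₁ r₂ r₃ : ℝ, r₃ ≠ 0 ∧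
      {r : Fin 4 → ℝ | r ∈ LCplus ∧ ∀ s ∈ LCplus,
          V A₀ A₁ A₂ 0 B₀ B₁ B₂ B₃ r ≤ V A₀ A₁ A₂ 0 B₀ B₁ B₂ B₃ s} =
        {![r₀, r₁, r₂, r₃], ![r₀, r₁, r₂, -r₃]}) ↔
    (0 < A₀ ∧ B₁ < B₃ ∧ B₂ < B₃ ∧
      A₁ ^ 2 / (B₃ - B₁) ^ 2 + A₂ ^ 2 / (B₃ - B₂) ^ 2 <
        A₀ ^ 2 / (B₀ - B₃) ^ 2) :=
  ⟨fwd_dir A₀ A₁ A₂ B₀ B₁ B₂ B₃ h12 h13 h23 h1 h2 h3,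
   bwd_dir A₀ A₁ A₂ B₀ B₁ B₂ B₃ h12 h13 h23 h1 h2 h3⟩
end

section
/- Suppose B₁, B₂, B₃ are pairwise distinct with B₁ < B₃, B₂ < B₃, B₃ < B₀; suppose A₃ = 0, A₀ > 0, and A₁²/(B₃ − B₁)² + A₂²/(B₃ − B₂)² < A₀²/(B₀ − B₃)² (the vector A lies inside the principal caustic cone). Then every nontrivial critical point r of V on LC⁺ with r₃ = 0 satisfies V(r) > −(1/2)·(A₀²/(B₀ − B₃) + A₁²/(B₃ − B₁) + A₂²/(B₃ − B₂)), i.e. it lies strictly above the depth of the symmetry-violating extrema. -/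
/-- Nontrivial critical points of the Landau potential on LC⁺ in the diagonal
frame: the Lagrange multiplier conditions. -/
def IsCritPt (A₀ A₁ A₂ A₃ B₀ B₁ B₂ B₃ : ℝ) (r : Fin 4 → ℝ) : Prop :=
  r ∈ LCplus ∧ r ≠ 0 ∧
    ∃ lam : ℝ, (B₀ - lam) * r 0 = A₀ ∧ (B₁ - lam) * r 1 = A₁ ∧
      (B₂ - lam) * r 2 = A₂ ∧ (B₃ - lam) * r 3 = A₃

set_option maxHeartbeats 1000000 in
/-- Inside the principal caustic cone, every symmetry-conserving critical point
lies strictly above the depth of the symmetry-violating extrema. -/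
theorem symmetric_extrema_shallower
    (A₀ A₁ A₂ B₀ B₁ B₂ B₃ : ℝ)
    (h12 : B₁ ≠ B₂) (h13 : B₁ < B₃) (h23 : B₂ < B₃) (h30 : B₃ < B₀)
    (hA0 : 0 < A₀)
    (hcaustic : A₁ ^ 2 / (B₃ - B₁) ^ 2 + A₂ ^ 2 / (B₃ - B₂) ^ 2 <
        A₀ ^ 2 / (B₀ - B₃) ^ 2) :
    ∀ r : Fin 4 → ℝ, IsCritPt A₀ A₁ A₂ 0 B₀ B₁ B₂ B₃ r → r 3 = 0 →
      V A₀ A₁ A₂ 0 B₀ B₁ B₂ B₃ r >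
        -(1 / 2) * (A₀ ^ 2 / (B₀ - B₃) + A₁ ^ 2 / (B₃ - B₁) + A₂ ^ 2 / (B₃ - B₂)) := by
  intro r hcrit hr3
  obtain ⟨⟨hr0nn, hcone⟩, hrne, lam, h0, h1, h2, h3⟩ := hcrit
  set x := r 0 with hxdef
  set y := r 1 with hydef
  set z := r 2 with hzdef
  have hcone' : x ^ 2 = y ^ 2 + z ^ 2 := by
    rw [hr3] at hcone; simpa using hcone
  -- x > 0
  have hx0 : x ≠ 0 := by
    intro h
    rw [h, mul_zero] at h0
    exact absurd h0 (ne_of_lt hA0)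
  have hx : 0 < x := lt_of_le_of_ne hr0nn (Ne.symm hx0)
  have hsum : 0 < y ^ 2 + z ^ 2 := by rw [← hcone']; positivity
  have dB03 : 0 < B₀ - B₃ := sub_pos.2 h30
  have dB31 : 0 < B₃ - B₁ := sub_pos.2 h13
  have dB32 : 0 < B₃ - B₂ := sub_pos.2 h23
  -- squared amplitudes
  have hA0sq : A₀ ^ 2 = (B₀ - lam) ^ 2 * (y ^ 2 + z ^ 2) := by
    rw [← h0]; linear_combination (B₀ - lam) ^ 2 * hcone'
  have hA1sq : A₁ ^ 2 = (B₁ - lam) ^ 2 * y ^ 2 := by rw [← h1]; ring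
  have hA2sq : A₂ ^ 2 = (B₂ - lam) ^ 2 * z ^ 2 := by rw [← h2]; ring
  -- lam ≠ B₃ from the caustic condition
  have hlam3 : lam ≠ B₃ := by
    intro hl
    subst hl
    rw [hA0sq, hA1sq, hA2sq] at hcaustic
    have e1 : (B₁ - lam) ^ 2 * y ^ 2 / (lam - B₁) ^ 2 = y ^ 2 := by
      rw [show (B₁ - lam) ^ 2 = (lam - B₁) ^ 2 by ring]
      field_simp
    have e2 : (B₂ - lam) ^ 2 * z ^ 2 / (lam - B₂) ^ 2 = z ^ 2 := by
      rw [show (B₂ - lam) ^ 2 = (lam - B₂) ^ 2 by ring]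
      field_simp
    have e0 : (B₀ - lam) ^ 2 * (y ^ 2 + z ^ 2) / (B₀ - lam) ^ 2 = y ^ 2 + z ^ 2 := by
      have : (B₀ - lam) ≠ 0 := by positivity
      field_simp
    rw [e1, e2, e0] at hcaustic
    exact lt_irrefl _ hcaustic
  have hB3l : 0 < (B₃ - lam) ^ 2 := by
    have : B₃ - lam ≠ 0 := sub_ne_zero.2 (Ne.symm hlam3)
    positivity
  -- rewrite V in terms of y, z, lam
  have hV : V A₀ A₁ A₂ 0 B₀ B₁ B₂ B₃ r
      = -((B₀ - lam) * (y ^ 2 + z ^ 2) - (B₁ - lam) * y ^ 2 - (B₂ - lam) * z ^ 2)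
        + (1 / 2) * (B₀ * (y ^ 2 + z ^ 2) - B₁ * y ^ 2 - B₂ * z ^ 2) := by
    simp only [V, ← hxdef, ← hydef, ← hzdef, hr3, ← h0, ← h1, ← h2]
    linear_combination (lam - B₀ / 2) * hcone'
  rw [gt_iff_lt, ← sub_pos, hV, hA0sq, hA1sq, hA2sq]
  have hEq : -((B₀ - lam) * (y ^ 2 + z ^ 2) - (B₁ - lam) * y ^ 2 - (B₂ - lam) * z ^ 2)
        + (1 / 2) * (B₀ * (y ^ 2 + z ^ 2) - B₁ * y ^ 2 - B₂ * z ^ 2)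
      - -(1 / 2) * ((B₀ - lam) ^ 2 * (y ^ 2 + z ^ 2) / (B₀ - B₃)
          + (B₁ - lam) ^ 2 * y ^ 2 / (B₃ - B₁) + (B₂ - lam) ^ 2 * z ^ 2 / (B₃ - B₂))
      = (B₃ - lam) ^ 2 * (y ^ 2 * ((B₀ - B₁) * (B₃ - B₂)) + z ^ 2 * ((B₀ - B₂) * (B₃ - B₁)))
          / (2 * ((B₀ - B₃) * ((B₃ - B₁) * (B₃ - B₂)))) := by
    field_simp
    ring
  rw [hEq]
  apply div_pos
  · apply mul_pos hB3l
    have hc1 : 0 < (B₀ - B₁) * (B₃ - B₂) :=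
      mul_pos (by linarith) (by linarith)
    have hc2 : 0 < (B₀ - B₂) * (B₃ - B₁) :=
      mul_pos (by linarith) (by linarith)
    have hyz : y ≠ 0 ∨ z ≠ 0 := by
      by_contra h
      push_neg at h
      rw [h.1, h.2] at hsum
      norm_num at hsum
    rcases hyz with hy | hz
    · have hy2 : 0 < y ^ 2 := by positivity
      nlinarith [mul_pos hy2 hc1, mul_nonneg (sq_nonneg z) hc2.le]
    · have hz2 : 0 < z ^ 2 := by positivity
      nlinarith [mul_pos hz2 hc2, mul_nonneg (sq_nonneg y) hc1.le]
  · positivity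
end
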